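/- Let V be a finite type of Boolean variables with a designated subset X ⊆ V of branch variables and complement Y = V \ X. Let R be a commutative semiring equipped with a partial order that is a meet-semilattice and in which addition is monotone (a ≤ b and c ≤ d implies a + c ≤ b + d). Let w : V → Bool → R be a weight function and φ a decidable predicate on total assignments V → Bool. Let D ⊆ X, let P : assignment of Boolean values to the variables in D (a partial policy), and let T : X → Bool agree with P on D (a completion of P). Then ∑_{a : Y → Bool} inf_{s : X → Bool, s agrees with P on D} ( if φ(s ⊎ a) then ∏_{v ∈ V} w v ((s ⊎ a) v) else 0 ) ≤ ∑_{σ : V → Bool, φ σ and σ agrees with T on X} ∏_{v ∈ V} w v (σ v), where s ⊎ a denotes the assignment on V combining s on X and a on Y, and the infimum is the finite meet over the nonempty set of assignments s agreeing with P on D. -/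

import Mathlib

open scoped Classical

private theorem sum_le_sum_of_hadd {ι : Type*} {R : Type*} [CommSemiring R] [SemilatticeInf R]
    (hadd : ∀ a b c d : R, a ≤ b → c ≤ d → a + c ≤ b + d)
    (s : Finset ι) (f g : ι → R) (h : ∀ i ∈ s, f i ≤ g i) :
    ∑ i ∈ s, f i ≤ ∑ i ∈ s, g i := by
  classical
  induction s using Finset.induction_on with
  | empty => simp
  | insert a t hx ih =>
    rw [Finset.sum_insert hx, Finset.sum_insert hx]
    exact hadd _ _ _ _ (h a (Finset.mem_insert_self _ _))
      (ih (fun i hi => h i (Finset.mem_insert_of_mem hi)))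

/-- Dual of Theorem 3.6, the correctness of the lower-bound procedure `lb`:
Let `V` be a finite set of Boolean variables with branch variables `X ⊆ V`
(complement `Y = V \ X`). Let `R` be a commutative semiring with a
meet-semilattice partial order in which addition is monotone. Let `P` be a
partial policy on `D ⊆ X` and `T` a completion of `P` (a total assignment to
`X` agreeing with `P` on `D`). Then the sum over assignments `a` to `Y` of
the meet, over completions `s` of `P`, of the weight of the combined
assignment `s ⊎ a` (if it satisfies `φ`, else `0`) is dominated by the
weighted model count of `φ` restricted to assignments agreeing with `T` on
`X`. -/
theorem lb_correctness {V : Type*} [Fintype V] [DecidableEq V]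
    {R : Type*} [CommSemiring R] [SemilatticeInf R]
    (hadd : ∀ a b c d : R, a ≤ b → c ≤ d → a + c ≤ b + d)
    (X D : Finset V) (hDX : D ⊆ X)
    (w : V → Bool → R) (φ : (V → Bool) → Prop) [DecidablePred φ]
    (P : V → Bool)
    (T : {v // v ∈ X} → Bool) (hT : ∀ v : {v // v ∈ X}, v.1 ∈ D → T v = P v.1)
    (hne : (Finset.univ.filter
        (fun s : {v // v ∈ X} → Bool => ∀ v : {v // v ∈ X}, v.1 ∈ D → s v = P v.1)).Nonempty) :
    (∑ a : {v // v ∉ X} → Bool,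
        (Finset.univ.filter
            (fun s : {v // v ∈ X} → Bool =>
              ∀ v : {v // v ∈ X}, v.1 ∈ D → s v = P v.1)).inf' hne
          (fun s =>
            if φ (fun v => if h : v ∈ X then s ⟨v, h⟩ else a ⟨v, h⟩) then
              ∏ v, w v (if h : v ∈ X then s ⟨v, h⟩ else a ⟨v, h⟩)
            else 0))
    ≤ ∑ σ ∈ Finset.univ.filter
        (fun σ : V → Bool => φ σ ∧ ∀ v : {v // v ∈ X}, σ v.1 = T v),
      ∏ v, w v (σ v) := by
  classical
  set comb : ({v // v ∈ X} → Bool) → ({v // v ∉ X} → Bool) → (V → Bool) :=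
    fun s a v => if h : v ∈ X then s ⟨v, h⟩ else a ⟨v, h⟩ with hcomb
  have hTmem : T ∈ Finset.univ.filter
      (fun s : {v // v ∈ X} → Bool => ∀ v : {v // v ∈ X}, v.1 ∈ D → s v = P v.1) := by
    simp only [Finset.mem_filter, Finset.mem_univ, true_and]
    exact hT
  calc (∑ a : {v // v ∉ X} → Bool,
        (Finset.univ.filter
            (fun s : {v // v ∈ X} → Bool =>
              ∀ v : {v // v ∈ X}, v.1 ∈ D → s v = P v.1)).inf' hne
          (fun s =>
            if φ (comb s a) then ∏ v, w v (comb s a v) else 0))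
      ≤ ∑ a : {v // v ∉ X} → Bool,
          (if φ (comb T a) then ∏ v, w v (comb T a v) else 0) := by
        apply sum_le_sum_of_hadd hadd
        intro a _
        exact Finset.inf'_le _ hTmem
    _ = ∑ σ ∈ Finset.univ.filter
        (fun σ : V → Bool => φ σ ∧ ∀ v : {v // v ∈ X}, σ v.1 = T v),
      ∏ v, w v (σ v) := by
        rw [← Finset.sum_filter]
        have hback : ∀ σ : V → Bool, (∀ v : {v // v ∈ X}, σ v.1 = T v) →
            comb T (fun v : {v // v ∉ X} => σ v.1) = σ := by
          intro σ hσ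
          funext v
          simp only [hcomb]
          split
          · exact (hσ ⟨v, by assumption⟩).symm
          · rfl
        apply Finset.sum_bij' (i := fun a _ => comb T a)
          (j := fun σ _ => fun v : {v // v ∉ X} => σ v.1)
        · intro a ha
          simp only [Finset.mem_filter, Finset.mem_univ, true_and] at ha ⊢
          refine ⟨ha, fun v => ?_⟩
          simp [hcomb]
        · intro σ hσ
          simp only [Finset.mem_filter, Finset.mem_univ, true_and] at hσ ⊢
          rw [hback σ hσ.2]
          exact hσ.1
        · intro a ha
          funext v
          simp only [hcomb]
          rw [dif_neg v.2]
        · intro σ hσ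
          simp only [Finset.mem_filter, Finset.mem_univ, true_and] at hσ
          exact hback σ hσ.2
        · intro a ha
          rfl
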